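/- arXiv:1708.07316 — 2 statements merged into one kernel-verified Lean document; each statement's English description precedes it below -/
import Mathlib

section
/- Let Φ be a reduced irreducible root system spanning V with base Δ, which is not simply-laced (Φ has two root lengths), let p be a prime number, let S ⊆ Δ be such that every root in S is long, and set η_S := Σ_{α∈S} η(α). Then η_S is orbitally p-close if and only if ⟨η_S, (ʰα)∨⟩ ≤ p − 1, where (ʰα)∨ is the coroot corresponding to the highest root ʰα with respect to Δ. -/
namespace QC

open Classical

variable {V : Type*} [AddCommGroup V] [Module ℚ V]

/-- The contragredient action of a linear automorphism `w` of `V` on the dual space,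
characterized by `⟨w x, coact w f⟩ = ⟨x, f⟩`, i.e. `(coact w f) x = f (w⁻¹ x)`. -/
noncomputable def coact (w : V ≃ₗ[ℚ] V) (f : Module.Dual ℚ V) : Module.Dual ℚ V :=
  w.symm.dualMap f

/-- The Weyl group of the data `(Φ, co)`: the subgroup of linear automorphisms of `V`
generated by the reflections `s_α : x ↦ x - ⟨x, α∨⟩ α` for `α ∈ Φ`. -/
def weylGroup (Φ : Set V) (co : V → Module.Dual ℚ V) : Subgroup (V ≃ₗ[ℚ] V) :=
  Subgroup.closure { w : V ≃ₗ[ℚ] V | ∃ α ∈ Φ, ∀ x : V, w x = x - (co α x) • α }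

/-- `χ ∈ V` is quasi-constant with respect to a group `G` of automorphisms
(typically the Weyl group, or `W ⋊ Γ`). -/
def IsQuasiConstantWrt (Φ : Set V) (co : V → Module.Dual ℚ V)
    (G : Subgroup (V ≃ₗ[ℚ] V)) (χ : V) : Prop :=
  ∀ α ∈ Φ, co α χ ≠ 0 → ∀ σ, σ ∈ G → coact σ (co α) χ / co α χ ∈ ({-1, 0, 1} : Set ℚ)

/-- `χ ∈ V` is quasi-constant (with respect to the Weyl group). -/
def IsQuasiConstant (Φ : Set V) (co : V → Module.Dual ℚ V) (χ : V) : Prop :=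
  IsQuasiConstantWrt Φ co (weylGroup Φ co) χ

/-- A coweight `μ ∈ V∨` is quasi-constant with respect to a group `G`. -/
def IsQuasiConstantCowtWrt (Φ : Set V) (G : Subgroup (V ≃ₗ[ℚ] V))
    (μ : Module.Dual ℚ V) : Prop :=
  ∀ α ∈ Φ, μ α ≠ 0 → ∀ σ, σ ∈ G → μ (σ α) / μ α ∈ ({-1, 0, 1} : Set ℚ)

/-- A coweight `μ ∈ V∨` is quasi-constant (with respect to the Weyl group). -/
def IsQuasiConstantCowt (Φ : Set V) (co : V → Module.Dual ℚ V)
    (μ : Module.Dual ℚ V) : Prop :=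
  IsQuasiConstantCowtWrt Φ (weylGroup Φ co) μ

/-- `χ ∈ V` is minuscule: `⟨χ, α∨⟩ ∈ {-1,0,1}` for all roots `α`. -/
def IsMinuscule (Φ : Set V) (co : V → Module.Dual ℚ V) (χ : V) : Prop :=
  ∀ α ∈ Φ, co α χ ∈ ({-1, 0, 1} : Set ℚ)

/-- `μ ∈ V∨` is minuscule: `⟨α, μ⟩ ∈ {-1,0,1}` for all roots `α`. -/
def IsMinusculeCowt (Φ : Set V) (μ : Module.Dual ℚ V) : Prop :=
  ∀ α ∈ Φ, μ α ∈ ({-1, 0, 1} : Set ℚ)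

/-- The weight lattice `P = {χ ∈ V : ⟨χ, β∨⟩ ∈ ℤ for all β ∈ Φ}`. -/
def weightLattice (Φ : Set V) (co : V → Module.Dual ℚ V) : Set V :=
  { χ | ∀ β ∈ Φ, ∃ n : ℤ, co β χ = (n : ℚ) }

/-- The coweight lattice `P∨ = {μ ∈ V∨ : ⟨α, μ⟩ ∈ ℤ for all α ∈ Φ}`. -/
def coweightLattice (Φ : Set V) : Set (Module.Dual ℚ V) :=
  { μ | ∀ α ∈ Φ, ∃ n : ℤ, μ α = (n : ℚ) }

/-- `(Φ, co)` is a reduced root system (not necessarily spanning) in `V`, where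
`co α` is the coroot `α∨` viewed as a linear functional, with the Weyl group acting
compatibly on roots and coroots. -/
structure IsRootSystem (Φ : Set V) (co : V → Module.Dual ℚ V) : Prop where
  finite : Φ.Finite
  ne_zero : ∀ α ∈ Φ, α ≠ 0
  pair_self : ∀ α ∈ Φ, co α α = 2
  refl_mem : ∀ α ∈ Φ, ∀ β ∈ Φ, β - (co α β) • α ∈ Φ
  pair_int : ∀ α ∈ Φ, ∀ β ∈ Φ, ∃ n : ℤ, co α β = (n : ℚ)
  reduced : ∀ α ∈ Φ, ∀ c : ℚ, c • α ∈ Φ → c = 1 ∨ c = -1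
  weyl_root : ∀ w, w ∈ weylGroup Φ co → ∀ α ∈ Φ, w α ∈ Φ
  weyl_coroot : ∀ w, w ∈ weylGroup Φ co → ∀ α ∈ Φ, co (w α) = coact w (co α)

/-- `Φ` is irreducible: it is nonempty and admits no nontrivial orthogonal decomposition. -/
def IsIrreducible (Φ : Set V) (co : V → Module.Dual ℚ V) : Prop :=
  Φ.Nonempty ∧ ∀ Ψ ⊆ Φ, (∀ α ∈ Ψ, ∀ β ∈ Φ \ Ψ, co α β = 0) → Ψ = ∅ ∨ Ψ = Φ

/-- `Δ` is a base (set of simple roots) of `Φ`. -/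
structure IsBase (Φ : Set V) (co : V → Module.Dual ℚ V) (Δ : Set V) : Prop where
  subset : Δ ⊆ Φ
  indep : LinearIndependent ℚ ((↑) : Δ → V)
  span_eq : Submodule.span ℚ Δ = Submodule.span ℚ Φ
  decomp : ∀ α ∈ Φ, ∃ c : V →₀ ℕ, ↑c.support ⊆ Δ ∧
      (α = c.sum (fun v n => (n : ℚ) • v) ∨ α = - c.sum (fun v n => (n : ℚ) • v))

/-- `η` is the fundamental weight `η(α)` for the simple root `α ∈ Δ`:
`⟨η, β∨⟩ = δ_{αβ}` for `β ∈ Δ`. -/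
def IsFundWeight (co : V → Module.Dual ℚ V) (Δ : Set V) (α : V) (η : V) : Prop :=
  ∀ β ∈ Δ, co β η = if β = α then 1 else 0

/-- `f` is the fundamental coweight `η(α∨)` for the simple root `α ∈ Δ`:
`⟨β, f⟩ = δ_{αβ}` for `β ∈ Δ`. -/
def IsFundCoweight (Δ : Set V) (α : V) (f : Module.Dual ℚ V) : Prop :=
  ∀ β ∈ Δ, f β = if β = α then 1 else 0

/-- `χ` is cominuscule: `χ = η(α)` for some base `Δ` and `α ∈ Δ` such that the
fundamental coweight `η(α∨)` is minuscule. -/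
def IsCominuscule (Φ : Set V) (co : V → Module.Dual ℚ V) (χ : V) : Prop :=
  χ ∈ Submodule.span ℚ Φ ∧
  ∃ Δ : Set V, IsBase Φ co Δ ∧ ∃ α ∈ Δ, IsFundWeight co Δ α χ ∧
    ∀ f : Module.Dual ℚ V, IsFundCoweight Δ α f → IsMinusculeCowt Φ f

/-- `μ` is a cominuscule coweight: `μ = η(α∨)` for some base `Δ` and `α ∈ Δ` such that
the fundamental weight `η(α)` is minuscule. -/
def IsCominusculeCowt (Φ : Set V) (co : V → Module.Dual ℚ V)
    (μ : Module.Dual ℚ V) : Prop :=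
  ∃ Δ : Set V, IsBase Φ co Δ ∧ ∃ α ∈ Δ, IsFundCoweight Δ α μ ∧
    ∀ η : V, IsFundWeight co Δ α η → IsMinuscule Φ co η

/-- `χ` is `Δ`-dominant. -/
def IsDominant (co : V → Module.Dual ℚ V) (Δ : Set V) (χ : V) : Prop :=
  ∀ α ∈ Δ, 0 ≤ co α χ

/-- `μ ∈ V∨` is `Δ`-dominant. -/
def IsDominantCowt (Δ : Set V) (μ : Module.Dual ℚ V) : Prop :=
  ∀ α ∈ Δ, 0 ≤ μ α

/-- `χ` is orbitally `p`-close. -/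
def IsOrbitallyPClose (Φ : Set V) (co : V → Module.Dual ℚ V) (p : ℕ) (χ : V) : Prop :=
  ∀ α ∈ Φ, co α χ ≠ 0 → ∀ w, w ∈ weylGroup Φ co →
    |coact w (co α) χ / co α χ| ≤ (p : ℚ) - 1

end QC

namespace S13
open QC
variable {V : Type*} [AddCommGroup V] [Module ℚ V]

noncomputable def reflL (co : V → Module.Dual ℚ V) (β : V) : V →ₗ[ℚ] V :=
  LinearMap.id - (co β).smulRight β

lemma reflL_apply (co : V → Module.Dual ℚ V) (β x : V) :
    reflL co β x = x - co β x • β := rfl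

lemma reflL_invol (co : V → Module.Dual ℚ V) (β : V) (h2 : co β β = 2) :
    Function.Involutive (reflL co β) := by
  intro x
  simp only [reflL_apply, map_sub, map_smul, h2, smul_eq_mul]
  module

noncomputable def sRefl (co : V → Module.Dual ℚ V) (β : V) (h2 : co β β = 2) :
    V ≃ₗ[ℚ] V :=
  { reflL co β with
    invFun := reflL co β
    left_inv := reflL_invol co β h2
    right_inv := reflL_invol co β h2 }

lemma sRefl_apply (co : V → Module.Dual ℚ V) (β : V) (h2 : co β β = 2) (x : V) :
    sRefl co β h2 x = x - co β x • β := rfl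

lemma sRefl_mem {Φ : Set V} {co : V → Module.Dual ℚ V} {β : V} (hβ : β ∈ Φ)
    (h2 : co β β = 2) : sRefl co β h2 ∈ QC.weylGroup Φ co :=
  Subgroup.subset_closure ⟨β, hβ, fun _ => rfl⟩

example (w₁ w₂ : V ≃ₗ[ℚ] V) (x : V) : (w₁ * w₂) x = w₁ (w₂ x) := rfl
example (x : V) : (1 : V ≃ₗ[ℚ] V) x = x := rfl

end S13

set_option maxHeartbeats 1000000 in
open S13 in
/-- Lemma A.2(2) of the paper. Let `Φ` be irreducible spanning `V`
with base `Δ`, not simply-laced (two root lengths), `p` a prime, `S ⊆ Δ` consisting of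
long roots, and `η_S = Σ_{α ∈ S} η(α)`. Then `η_S` is orbitally `p`-close iff
`⟨η_S, (ʰα)∨⟩ ≤ p − 1`, where `(ʰα)∨` is the coroot of the highest root `ʰα`. -/
theorem statement13 {V : Type*} [AddCommGroup V] [Module ℚ V] [FiniteDimensional ℚ V]
    (Φ : Set V) (co : V → Module.Dual ℚ V)
    (hRS : QC.IsRootSystem Φ co) (hirr : QC.IsIrreducible Φ co)
    (hspan : Submodule.span ℚ Φ = ⊤)
    (Δ : Set V) (hΔ : QC.IsBase Φ co Δ)
    (p : ℕ) (hp : p.Prime)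
    -- a `W`-invariant inner product, used to compare root lengths
    (B : V →ₗ[ℚ] V →ₗ[ℚ] ℚ) (hBsymm : ∀ x y : V, B x y = B y x)
    (hBpos : ∀ x : V, x ≠ 0 → 0 < B x x)
    (hBinv : ∀ w, w ∈ QC.weylGroup Φ co → ∀ x y : V, B (w x) (w y) = B x y)
    -- `Φ` is not simply-laced: it has two root lengths
    (hml : ∃ α ∈ Φ, ∃ β ∈ Φ, B α α ≠ B β β)
    (S : Finset V) (hS : ↑S ⊆ Δ)
    -- every root in `S` is long
    (hlong : ∀ α ∈ S, ∀ β ∈ Φ, B β β ≤ B α α)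
    (η : V → V) (hη : ∀ α ∈ Δ, QC.IsFundWeight co Δ α (η α))
    -- `θ ∈ Φ` is the highest root `ʰα`
    (θ : V) (hθ : θ ∈ Φ)
    (hθhigh : ∀ β ∈ Φ, ∃ c : V →₀ ℕ, ↑c.support ⊆ Δ ∧
        θ - β = c.sum fun v n => (n : ℚ) • v) :
    QC.IsOrbitallyPClose Φ co p (∑ α ∈ S, η α) ↔
      co θ (∑ α ∈ S, η α) ≤ (p : ℚ) - 1 := by
  classical
  set χ : V := ∑ α ∈ S, η α with hχdef
  -- basic numerology
  have hp1 : (1 : ℚ) ≤ (p : ℚ) - 1 := by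
    have := hp.two_le
    have : (2:ℚ) ≤ (p:ℚ) := by exact_mod_cast this
    linarith
  -- basis from Δ
  have hΔind : LinearIndependent ℚ ((↑) : Δ → V) := hΔ.indep
  have hΔspan : ⊤ ≤ Submodule.span ℚ (Set.range ((↑) : Δ → V)) := by
    rw [Subtype.range_coe, hΔ.span_eq, hspan]
  let b : Module.Basis Δ ℚ V := Module.Basis.mk hΔind hΔspan
  have repr_base : ∀ γ (hγ : γ ∈ Δ) v (hv : v ∈ Δ),
      b.repr γ ⟨v, hv⟩ = if γ = v then 1 else 0 := by
    intro γ hγ v hv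
    have h1 : b.repr γ = Finsupp.single ⟨γ, hγ⟩ 1 := by
      conv_lhs => rw [show γ = b ⟨γ, hγ⟩ from (Module.Basis.mk_apply hΔind hΔspan ⟨γ, hγ⟩).symm]
      exact b.repr_self _
    rw [h1, Finsupp.single_apply]
    simp [Subtype.mk_eq_mk]
  have repr_coeff : ∀ (c : V →₀ ℕ), ↑c.support ⊆ Δ → ∀ γ (hγ : γ ∈ Δ),
      b.repr (c.sum fun v n => (n : ℚ) • v) ⟨γ, hγ⟩ = (c γ : ℚ) := by
    intro c hc γ hγ
    rw [Finsupp.sum, map_sum, Finsupp.finset_sum_apply]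
    have hval : ∀ v ∈ c.support,
        (b.repr ((c v : ℚ) • v)) ⟨γ, hγ⟩ = if v = γ then (c v : ℚ) else 0 := by
      intro v hv
      rw [map_smul, Finsupp.smul_apply, repr_base v (hc hv) γ hγ]
      by_cases h : v = γ <;> simp [h]
    rw [Finset.sum_congr rfl hval, Finset.sum_ite_eq' c.support γ (fun v => (c v : ℚ))]
    by_cases h : γ ∈ c.support
    · simp [h]
    · simp [h, Finsupp.notMem_support_iff.mp h]
  have hsum_eval : ∀ (c : V →₀ ℕ) (z : V), B (c.sum fun v n => (n : ℚ) • v) z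
      = ∑ v ∈ c.support, (c v : ℚ) * B v z := by
    intro c z
    rw [Finsupp.sum, map_sum, LinearMap.coe_sum, Finset.sum_apply]
    exact Finset.sum_congr rfl fun v _ => by
      rw [map_smul, LinearMap.smul_apply, smul_eq_mul]
  -- coroot formula
  have hBposΦ : ∀ β ∈ Φ, 0 < B β β := fun β hβ => hBpos β (hRS.ne_zero β hβ)
  have hco : ∀ β ∈ Φ, ∀ x : V, co β x * B β β = 2 * B β x := by
    intro β hβ x
    have h2 := hRS.pair_self β hβ
    have hs := hBinv (sRefl co β h2) (sRefl_mem hβ h2) x β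
    rw [sRefl_apply, sRefl_apply, h2] at hs
    rw [show β - (2:ℚ) • β = -β by module] at hs
    simp only [map_sub, map_smul, map_neg, LinearMap.sub_apply, LinearMap.smul_apply,
      LinearMap.neg_apply, smul_eq_mul] at hs
    have hsymm := hBsymm x β
    nlinarith [hs]
  have hneg : ∀ β ∈ Φ, -β ∈ Φ := by
    intro β hβ
    have := hRS.refl_mem β hβ β hβ
    rwa [hRS.pair_self β hβ, show β - (2:ℚ) • β = -β by module] at this
  -- pairing of simple roots with χ
  have hχsimple : ∀ γ ∈ Δ, co γ χ = if γ ∈ S then 1 else 0 := by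
    intro γ hγ
    rw [hχdef, map_sum]
    rw [Finset.sum_congr rfl (fun α hα => hη α (hS hα) γ hγ)]
    rw [Finset.sum_ite_eq S γ (fun _ => (1:ℚ))]
  have hBχ : ∀ γ ∈ Δ, 2 * B γ χ = if γ ∈ S then B γ γ else 0 := by
    intro γ hγ
    have h := hco γ (hΔ.subset hγ) χ
    rw [hχsimple γ hγ] at h
    split_ifs at h ⊢ with h1 <;> linarith
  have hBχ0 : ∀ γ ∈ Δ, 0 ≤ B γ χ := by
    intro γ hγ
    have := hBχ γ hγ
    split_ifs at this with h1
    · nlinarith [hBposΦ γ (hΔ.subset hγ)]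
    · linarith
  -- θ is dominant
  have hθdom : ∀ γ ∈ Δ, 0 ≤ co γ θ := by
    intro γ hγ
    by_contra hlt
    push_neg at hlt
    have hγΦ := hΔ.subset hγ
    have hrefl : θ - co γ θ • γ ∈ Φ := hRS.refl_mem γ hγΦ θ hθ
    obtain ⟨c, hcs, hcsum⟩ := hθhigh _ hrefl
    rw [show θ - (θ - co γ θ • γ) = co γ θ • γ by module] at hcsum
    have h1 := repr_coeff c hcs γ hγ
    rw [← hcsum, map_smul, Finsupp.smul_apply, repr_base γ hγ γ hγ] at h1
    simp only [if_true, eq_self_iff_true, smul_eq_mul, mul_one] at h1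
    norm_num at h1
    have : (0:ℚ) ≤ (c γ : ℚ) := Nat.cast_nonneg _
    linarith
  have hBθ0 : ∀ γ ∈ Δ, 0 ≤ B γ θ := by
    intro γ hγ
    have h := hco γ (hΔ.subset hγ) θ
    nlinarith [hθdom γ hγ, hBposΦ γ (hΔ.subset hγ)]
  -- B β χ is maximized at θ
  have hhigh : ∀ β ∈ Φ, B β χ ≤ B θ χ := by
    intro β hβ
    obtain ⟨c, hcs, hcsum⟩ := hθhigh β hβ
    have h1 : B θ χ - B β χ = ∑ v ∈ c.support, (c v : ℚ) * B v χ := by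
      rw [← hsum_eval c χ, ← hcsum]
      simp only [map_sub, LinearMap.sub_apply]
    have h2 : (0:ℚ) ≤ ∑ v ∈ c.support, (c v : ℚ) * B v χ :=
      Finset.sum_nonneg fun v hv =>
        mul_nonneg (Nat.cast_nonneg _) (hBχ0 v (hcs hv))
    linarith
  have hBθχ0 : 0 ≤ B θ χ := by
    have := hhigh (-θ) (hneg θ hθ)
    simp only [map_neg, LinearMap.neg_apply] at this
    linarith
  -- conjugacy of equal-length roots pairing positively
  have conj_same : ∀ β ∈ Φ, ∀ γ ∈ Φ, B β β = B γ γ → 0 < B β γ →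
      ∃ w ∈ QC.weylGroup Φ co, w γ = β := by
    intro β hβ γ hγ hnorm hpos
    by_cases heq : β = γ
    · exact ⟨1, one_mem _, by rw [heq]; rfl⟩
    have hγγ : 0 < B γ γ := hBposΦ γ hγ
    have hββ : 0 < B β β := hBposΦ β hβ
    have hsymm := hBsymm β γ
    -- β and γ are not proportional
    have hnp : β ≠ (B β γ / B γ γ) • γ := by
      intro hcc
      have hmem : (B β γ / B γ γ) • γ ∈ Φ := hcc ▸ hβ
      rcases hRS.reduced γ hγ _ hmem with h1 | h1
      · exact heq (by rw [hcc, h1, one_smul])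
      · rw [h1] at hcc
        rw [hcc] at hpos
        simp only [neg_smul, one_smul, map_neg, LinearMap.neg_apply] at hpos
        linarith
    -- strict Cauchy-Schwarz
    have hCS : B β γ * B β γ < B β β * B γ γ := by
      have hz : β - (B β γ / B γ γ) • γ ≠ 0 := fun h0 => hnp (by
        rw [← sub_eq_zero]; exact h0)
      have hq := hBpos _ hz
      simp only [map_sub, map_smul, LinearMap.sub_apply, LinearMap.smul_apply,
        smul_eq_mul] at hq
      have ht : B β γ / B γ γ * B γ γ = B β γ := div_mul_cancel₀ _ hγγ.ne'
      have hsymm2 := hBsymm γ β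
      nlinarith [hq, ht]
    -- the pairing is 1 in both directions
    have hpβγ : co β γ = 1 := by
      obtain ⟨n, hn⟩ := hRS.pair_int β hβ γ hγ
      have hv : co β γ * B β β = 2 * B β γ := hco β hβ γ
      have hBlt : B β γ < B β β := by nlinarith [hCS, hnorm, hpos, hββ]
      have h0 : 0 < co β γ := by nlinarith
      have h2 : co β γ < 2 := by nlinarith [hBlt, hββ, hv]
      rw [hn] at h0 h2 ⊢
      have : (0:ℤ) < n := by exact_mod_cast h0
      have : n < 2 := by exact_mod_cast h2
      norm_num
      omega
    have hpγβ : co γ β = 1 := by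
      obtain ⟨n, hn⟩ := hRS.pair_int γ hγ β hβ
      have hv : co γ β * B γ γ = 2 * B γ β := hco γ hγ β
      have hsymm2 := hBsymm γ β
      have hBlt : B β γ < B β β := by nlinarith [hCS, hnorm, hpos, hββ]
      have h0 : 0 < co γ β := by nlinarith
      have h2 : co γ β < 2 := by nlinarith [hBlt, hββ, hv, hnorm]
      rw [hn] at h0 h2 ⊢
      have : (0:ℤ) < n := by exact_mod_cast h0
      have : n < 2 := by exact_mod_cast h2
      norm_num
      omega
    set s1 := sRefl co β (hRS.pair_self β hβ) with hs1
    set s2 := sRefl co γ (hRS.pair_self γ hγ) with hs2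
    refine ⟨s1 * s2 * s1, mul_mem (mul_mem (sRefl_mem hβ _) (sRefl_mem hγ _))
      (sRefl_mem hβ _), ?_⟩
    have e1 : s1 γ = γ - β := by
      rw [hs1, sRefl_apply, hpβγ, one_smul]
    have e2 : s2 (γ - β) = -β := by
      rw [hs2, sRefl_apply, map_sub, hRS.pair_self γ hγ, hpγβ]
      module
    have e3 : s1 (-β) = β := by
      rw [hs1, sRefl_apply, map_neg, hRS.pair_self β hβ]
      module
    show s1 (s2 (s1 γ)) = β
    rw [e1, e2, e3]
  constructor
  · -- forward direction
    intro hqc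
    by_cases hpos : 0 < co θ χ
    swap
    · push_neg at hpos; linarith
    -- S nonempty etc.
    have hBθχpos : 0 < B θ χ := by
      have h := hco θ hθ χ
      nlinarith [hBposΦ θ hθ]
    have hSne : S.Nonempty := by
      by_contra h
      rw [Finset.not_nonempty_iff_eq_empty] at h
      rw [hχdef, h, Finset.sum_empty] at hBθχpos
      simp at hBθχpos
    obtain ⟨α₀, hα₀⟩ := hSne
    have hSlen : ∀ γ ∈ S, B γ γ = B α₀ α₀ :=
      fun γ hγ => le_antisymm (hlong α₀ hα₀ γ (hΔ.subset (hS hγ)))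
        (hlong γ hγ α₀ (hΔ.subset (hS hα₀)))
    have hLmax : ∀ β ∈ Φ, B β β ≤ B α₀ α₀ := hlong α₀ hα₀
    have hα₀Φ : α₀ ∈ Φ := hΔ.subset (hS hα₀)
    -- a generalized higher-root comparison
    have hcmp : ∀ z : V, (∀ γ ∈ Δ, 0 ≤ B γ z) → ∀ β ∈ Φ, B β z ≤ B θ z := by
      intro z hz β hβ
      obtain ⟨c, hcs, hcsum⟩ := hθhigh β hβ
      have h1 : B θ z - B β z = ∑ v ∈ c.support, (c v : ℚ) * B v z := by
        rw [← hsum_eval c z, ← hcsum]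
        simp only [map_sub, LinearMap.sub_apply]
      have h2 : (0:ℚ) ≤ ∑ v ∈ c.support, (c v : ℚ) * B v z :=
        Finset.sum_nonneg fun v hv => mul_nonneg (Nat.cast_nonneg _) (hz v (hcs hv))
      linarith
    -- θ is long
    have hθlong : B θ θ = B α₀ α₀ := by
      -- dominant representative of the orbit of α₀
      set O : Set V := {x | x ∈ Φ ∧ ∃ w ∈ QC.weylGroup Φ co, w α₀ = x} with hO
      have hOfin : O.Finite := hRS.finite.subset fun x hx => hx.1
      have hOne : O.Nonempty := ⟨α₀, hα₀Φ, 1, one_mem _, rfl⟩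
      have hΔfin : Δ.Finite := hRS.finite.subset hΔ.subset
      set e : V := ∑ γ ∈ hΔfin.toFinset, η γ with he
      have hcoe : ∀ γ ∈ Δ, co γ e = 1 := by
        intro γ hγ
        rw [he, map_sum]
        rw [Finset.sum_congr rfl fun δ hδ => hη δ (hΔfin.mem_toFinset.mp hδ) γ hγ]
        rw [Finset.sum_ite_eq hΔfin.toFinset γ (fun _ => (1:ℚ))]
        simp [hΔfin.mem_toFinset.mpr hγ]
      have hBe : ∀ γ ∈ Δ, 0 < B γ e := by
        intro γ hγ
        have h := hco γ (hΔ.subset hγ) e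
        rw [hcoe γ hγ] at h
        nlinarith [hBposΦ γ (hΔ.subset hγ)]
      obtain ⟨x0, hx0O, hx0max⟩ := Set.Finite.exists_maximalFor (fun x => B x e) O hOfin hOne
      have hx0Φ : x0 ∈ Φ := hx0O.1
      have hx0dom : ∀ γ ∈ Δ, 0 ≤ co γ x0 := by
        intro γ hγ
        by_contra hlt
        push_neg at hlt
        have hγΦ := hΔ.subset hγ
        have h2γ := hRS.pair_self γ hγΦ
        set y := x0 - co γ x0 • γ with hy
        have hyΦ : y ∈ Φ := hRS.refl_mem γ hγΦ x0 hx0Φ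
        obtain ⟨_, w, hw, hwx⟩ := hx0O
        have hyO : y ∈ O := ⟨hyΦ, sRefl co γ h2γ * w,
          mul_mem (sRefl_mem hγΦ h2γ) hw, by
            show sRefl co γ h2γ (w α₀) = y
            rw [hwx]; rfl⟩
        have hBy : B x0 e < B y e := by
          have hexp : B y e = B x0 e - co γ x0 * B γ e := by
            rw [hy]
            simp only [map_sub, map_smul, LinearMap.sub_apply, LinearMap.smul_apply,
              smul_eq_mul]
          nlinarith [hBe γ hγ]
        have := hx0max (j := y) hyO (le_of_lt hBy)
        simp only at this
        linarith
      have hBx0 : ∀ γ ∈ Δ, 0 ≤ B γ x0 := by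
        intro γ hγ
        have h := hco γ (hΔ.subset hγ) x0
        nlinarith [hx0dom γ hγ, hBposΦ γ (hΔ.subset hγ)]
      have hx0len : B x0 x0 = B α₀ α₀ := by
        obtain ⟨_, w, hw, hwx⟩ := hx0O
        rw [← hwx]
        exact hBinv w hw α₀ α₀
      have k1 : B x0 θ ≤ B θ θ := by
        have := hcmp θ hBθ0 x0 hx0Φ
        rw [hBsymm x0 θ] at this ⊢
        exact this
      have k2 : B x0 x0 ≤ B θ x0 := hcmp x0 hBx0 x0 hx0Φ
      have k3 : B θ x0 = B x0 θ := hBsymm θ x0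
      have k4 : B θ θ ≤ B α₀ α₀ := hLmax θ hθ
      linarith [hx0len ▸ le_trans k2 (k3 ▸ k1)]
    -- main induction: long positive roots pairing positively with χ are conjugate to S
    have claimE : ∀ n : ℕ, ∀ β, β ∈ Φ → ∀ c : V →₀ ℕ, ↑c.support ⊆ Δ →
        β = c.sum (fun v m => (m:ℚ) • v) → (c.sum fun _ m => m) ≤ n →
        B β β = B α₀ α₀ → 0 < B β χ →
        ∃ α ∈ S, ∃ w ∈ QC.weylGroup Φ co, w α = β := by
      intro n
      induction n with
      | zero =>
        intro β hβ c hcs hcsum hht _ _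
        exfalso
        have hc0 : c.support = ∅ := by
          by_contra hne'
          obtain ⟨v, hv⟩ := Finset.nonempty_iff_ne_empty.mpr hne'
          have h1 : (c.sum fun _ m => m) = 0 := Nat.le_zero.mp hht
          rw [Finsupp.sum] at h1
          exact Finsupp.mem_support_iff.mp hv (Finset.sum_eq_zero_iff.mp h1 v hv)
        exact hRS.ne_zero β hβ (by rw [hcsum, Finsupp.sum, hc0, Finset.sum_empty])
      | succ n ih =>
        intro β hβ c hcs hcsum hht hlen hposχ
        have hexp : B β β = ∑ v ∈ c.support, (c v : ℚ) * B v β := by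
          nth_rewrite 1 [hcsum]
          exact hsum_eval c β
        have hex : ∃ v ∈ c.support, 0 < B v β := by
          by_contra hno
          push_neg at hno
          have hle0 : B β β ≤ 0 := by
            rw [hexp]
            exact Finset.sum_nonpos fun v hv =>
              mul_nonpos_iff.mpr (Or.inl ⟨Nat.cast_nonneg _, hno v hv⟩)
          linarith [hBposΦ β hβ]
        obtain ⟨γ₁, hγ₁supp, hγ₁pos⟩ := hex
        have hγ₁Δ : γ₁ ∈ Δ := hcs hγ₁supp
        have hγ₁Φ : γ₁ ∈ Φ := hΔ.subset hγ₁Δ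
        by_cases hγ₁S : γ₁ ∈ S
        · by_cases heq : β = γ₁
          · exact ⟨γ₁, hγ₁S, 1, one_mem _, by rw [heq]; rfl⟩
          · have hnn : B β β = B γ₁ γ₁ := by rw [hlen, hSlen γ₁ hγ₁S]
            obtain ⟨w, hw, hwγ⟩ := conj_same β hβ γ₁ hγ₁Φ hnn
              (by rw [hBsymm]; exact hγ₁pos)
            exact ⟨γ₁, hγ₁S, w, hw, hwγ⟩
        · have hBγ₁χ : B γ₁ χ = 0 := by
            have h := hBχ γ₁ hγ₁Δ
            rw [if_neg hγ₁S] at h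
            linarith
          have h2γ := hRS.pair_self γ₁ hγ₁Φ
          obtain ⟨mz, hmz⟩ := hRS.pair_int γ₁ hγ₁Φ β hβ
          have hkpos : 0 < co γ₁ β := by
            have h := hco γ₁ hγ₁Φ β
            nlinarith [hBposΦ γ₁ hγ₁Φ]
          have hmz1 : 1 ≤ mz := by
            have h : (0:ℚ) < (mz:ℚ) := hmz ▸ hkpos
            exact_mod_cast h
          set β' := β - co γ₁ β • γ₁ with hβ'
          have hβ'Φ : β' ∈ Φ := hRS.refl_mem γ₁ hγ₁Φ β hβ
          have hsβ : sRefl co γ₁ h2γ β = β' := rfl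
          have hβ'len : B β' β' = B α₀ α₀ := by
            rw [← hlen, ← hsβ]
            exact hBinv _ (sRefl_mem hγ₁Φ h2γ) β β
          have hβ'χ : B β' χ = B β χ := by
            rw [hβ']
            simp only [map_sub, map_smul, LinearMap.sub_apply, LinearMap.smul_apply,
              smul_eq_mul, hBγ₁χ]
            ring
          have hδex : ∃ δ ∈ c.support, δ ≠ γ₁ := by
            by_contra hno
            push_neg at hno
            have hsupp : c.support = {γ₁} :=
              Finset.eq_singleton_iff_unique_mem.mpr ⟨hγ₁supp, fun x hx => hno x hx⟩
            have hβeq : β = (c γ₁ : ℚ) • γ₁ := by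
              rw [hcsum, Finsupp.sum, hsupp, Finset.sum_singleton]
            rcases hRS.reduced γ₁ hγ₁Φ (c γ₁ : ℚ) (hβeq ▸ hβ) with h1 | h1
            · rw [h1, one_smul] at hβeq
              rw [hβeq, hBγ₁χ] at hposχ
              exact lt_irrefl _ hposχ
            · have hge : (0:ℚ) ≤ (c γ₁ : ℚ) := Nat.cast_nonneg _
              rw [h1] at hge
              linarith
          obtain ⟨δ, hδsupp, hδne⟩ := hδex
          have hδΔ : δ ∈ Δ := hcs hδsupp
          have hreprβ : ∀ v (hv : v ∈ Δ), b.repr β ⟨v, hv⟩ = (c v : ℚ) := by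
            intro v hv
            rw [hcsum]
            exact repr_coeff c hcs v hv
          have hreprβ' : ∀ v (hv : v ∈ Δ), b.repr β' ⟨v, hv⟩
              = (c v : ℚ) - co γ₁ β * (if γ₁ = v then 1 else 0) := by
            intro v hv
            rw [hβ', map_sub, map_smul, Finsupp.sub_apply, Finsupp.smul_apply,
              hreprβ v hv, repr_base γ₁ hγ₁Δ v hv, smul_eq_mul]
          obtain ⟨c', hc's, hsgn'⟩ := hΔ.decomp β' hβ'Φ
          have hsgnpos : β' = c'.sum fun v m => (m:ℚ) • v := by
            rcases hsgn' with h | h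
            · exact h
            · exfalso
              have h1 := hreprβ' δ hδΔ
              rw [if_neg (fun hh => hδne hh.symm), mul_zero, sub_zero] at h1
              have h2 : b.repr β' ⟨δ, hδΔ⟩ = -(c' δ : ℚ) := by
                rw [h, map_neg, Finsupp.neg_apply, repr_coeff c' hc's δ hδΔ]
              rw [h2] at h1
              have h4 : (0:ℚ) ≤ (c' δ : ℚ) := Nat.cast_nonneg _
              have h5 : (c δ : ℚ) = 0 := by linarith [Nat.cast_nonneg (α := ℚ) (c δ)]
              exact Finsupp.mem_support_iff.mp hδsupp (by exact_mod_cast h5)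
          have hreprc' : ∀ v (hv : v ∈ Δ), b.repr β' ⟨v, hv⟩ = (c' v : ℚ) := by
            intro v hv
            rw [hsgnpos]
            exact repr_coeff c' hc's v hv
          have hmzc : ((mz.toNat : ℕ) : ℚ) = co γ₁ β := by
            have h4 : (mz.toNat : ℤ) = mz := Int.toNat_of_nonneg (by omega)
            rw [hmz]
            exact_mod_cast h4
          have hceq : c = c' + Finsupp.single γ₁ mz.toNat := by
            ext v
            by_cases hvΔ : v ∈ Δ
            · have h1 := hreprβ' v hvΔ
              rw [hreprc' v hvΔ] at h1
              have h2 : (c v : ℚ) = (c' v : ℚ)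
                  + ((mz.toNat : ℕ) : ℚ) * (if γ₁ = v then 1 else 0) := by
                rw [hmzc]
                split_ifs at h1 ⊢ <;> linarith
              rw [Finsupp.add_apply, Finsupp.single_apply]
              split_ifs at h2 ⊢ with hif
              · rw [mul_one] at h2
                exact_mod_cast h2
              · rw [mul_zero, add_zero] at h2
                exact_mod_cast h2
            · have hcv : c v = 0 := Finsupp.notMem_support_iff.mp
                (fun hvv => hvΔ (hcs hvv))
              have hc'v : c' v = 0 := Finsupp.notMem_support_iff.mp
                (fun hvv => hvΔ (hc's hvv))
              have hsv : Finsupp.single γ₁ mz.toNat v = 0 := by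
                rw [Finsupp.single_apply, if_neg]
                intro hh
                exact hvΔ (hh ▸ hγ₁Δ)
              rw [Finsupp.add_apply, hcv, hc'v, hsv]
          have hhtc' : (c'.sum fun _ m => m) ≤ n := by
            have h1 : (c.sum fun (_ : V) (m : ℕ) => m)
                = (c'.sum fun _ m => m) + mz.toNat := by
              rw [hceq, Finsupp.sum_add_index' (fun _ => rfl) (fun _ _ _ => rfl),
                Finsupp.sum_single_index rfl]
            have hm1 : 1 ≤ mz.toNat := by omega
            omega
          obtain ⟨α, hαS, w, hw, hwα⟩ := ih β' hβ'Φ c' hc's hsgnpos hhtc' hβ'len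
            (by rw [hβ'χ]; exact hposχ)
          refine ⟨α, hαS, sRefl co γ₁ h2γ * w,
            mul_mem (sRefl_mem hγ₁Φ h2γ) hw, ?_⟩
          show sRefl co γ₁ h2γ (w α) = β
          rw [hwα, ← hsβ]
          exact reflL_invol co γ₁ h2γ β
    -- θ is conjugate to an element of S
    have hconj : ∃ α ∈ S, ∃ w ∈ QC.weylGroup Φ co, w α = θ := by
      obtain ⟨c, hcs, hsgn⟩ := hΔ.decomp θ hθ
      have hsgnpos : θ = c.sum fun v m => (m:ℚ) • v := by
        rcases hsgn with h | h
        · exact h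
        · exfalso
          have h1 : B θ χ = -∑ v ∈ c.support, (c v:ℚ) * B v χ := by
            conv_lhs => rw [h]
            rw [map_neg, LinearMap.neg_apply, hsum_eval c χ]
          have h2 : (0:ℚ) ≤ ∑ v ∈ c.support, (c v:ℚ) * B v χ :=
            Finset.sum_nonneg fun v hv => mul_nonneg (Nat.cast_nonneg _) (hBχ0 v (hcs hv))
          linarith
      exact claimE (c.sum fun _ m => m) θ hθ c hcs hsgnpos le_rfl hθlong hBθχpos
    obtain ⟨α, hαS, w, hw, hwα⟩ := hconj
    have hαΦ : α ∈ Φ := hΔ.subset (hS hαS)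
    have h1 : co α χ = 1 := by rw [hχsimple α (hS hαS)]; simp [hαS]
    have := hqc α hαΦ (by rw [h1]; norm_num) w hw
    rw [h1, ← hRS.weyl_coroot w hw α hαΦ, hwα] at this
    calc co θ χ ≤ |co θ χ / 1| := by rw [div_one]; exact le_abs_self _
    _ ≤ (p:ℚ) - 1 := this
  · -- backward direction
    intro hle
    intro α hα hne w hw
    rw [← hRS.weyl_coroot w hw α hα]
    set β := w α with hβdef
    have hβΦ : β ∈ Φ := hRS.weyl_root w hw α hα
    have hBαβ : B β β = B α α := hBinv w hw α α
    have hSne : S.Nonempty := by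
      by_contra h
      rw [Finset.not_nonempty_iff_eq_empty] at h
      apply hne
      rw [hχdef, h, Finset.sum_empty, map_zero]
    obtain ⟨α₀, hα₀⟩ := hSne
    have hL : 0 < B α₀ α₀ := hBposΦ α₀ (hΔ.subset (hS hα₀))
    -- integrality: 2 B α χ is an integer multiple of L
    have hSlen : ∀ γ ∈ S, B γ γ = B α₀ α₀ :=
      fun γ hγ => le_antisymm (hlong α₀ hα₀ γ (hΔ.subset (hS hγ)))
        (hlong γ hγ α₀ (hΔ.subset (hS hα₀)))
    have hint : ∀ δ ∈ Φ, ∃ n : ℤ, 2 * B δ χ = n * B α₀ α₀ := by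
      intro δ hδ
      obtain ⟨c, hcs, hsgn⟩ := hΔ.decomp δ hδ
      have hkey : 2 * B (c.sum fun v n => (n:ℚ) • v) χ
          = ((∑ v ∈ c.support, if v ∈ S then c v else 0 : ℕ) : ℚ) * B α₀ α₀ := by
        rw [hsum_eval c χ, Finset.mul_sum]
        push_cast
        rw [Finset.sum_mul]
        refine Finset.sum_congr rfl fun v hv => ?_
        have hBv := hBχ v (hcs hv)
        by_cases hvS : v ∈ S
        · rw [if_pos hvS]
          rw [if_pos hvS, hSlen v hvS] at hBv
          nlinarith [hBv]
        · rw [if_neg hvS]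
          rw [if_neg hvS] at hBv
          nlinarith [hBv]
      rcases hsgn with h | h
      · exact ⟨(∑ v ∈ c.support, if v ∈ S then c v else 0 : ℕ), by rw [h, hkey]; push_cast; ring⟩
      · refine ⟨-(∑ v ∈ c.support, if v ∈ S then c v else 0 : ℕ), ?_⟩
        rw [h]
        simp only [map_neg, LinearMap.neg_apply]
        push_cast
        rw [show 2 * -B (c.sum fun v n => (n:ℚ) • v) χ = -(2 * B (c.sum fun v n => (n:ℚ) • v) χ) by ring, hkey]
        push_cast
        ring
    have hBαχ : B α₀ α₀ / 2 ≤ |B α χ| := by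
      obtain ⟨n, hn⟩ := hint α hα
      have hBαne : B α χ ≠ 0 := by
        intro h0
        apply hne
        have h : co α χ * B α α = 0 := by
          have := hco α hα χ; rw [h0] at this; linarith
        rcases mul_eq_zero.mp h with h | h
        · exact h
        · exact absurd h (hBposΦ α hα).ne'
      have hn0 : n ≠ 0 := by
        intro h0; rw [h0] at hn; simp at hn; exact hBαne (by linarith)
      have : (1:ℚ) ≤ |(n:ℚ)| := by
        rw [← Int.cast_abs]
        exact_mod_cast Int.one_le_abs hn0
      have habs : 2 * |B α χ| = |(n:ℚ)| * B α₀ α₀ := by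
        rw [← abs_of_pos hL, ← abs_mul, ← hn, abs_mul]
        norm_num
      nlinarith
    have hnum : |B β χ| ≤ B θ χ := by
      rw [abs_le]
      constructor
      · have := hhigh (-β) (hneg β hβΦ)
        simp only [map_neg, LinearMap.neg_apply] at this
        linarith
      · exact hhigh β hβΦ
    -- assemble
    have hBβθ : B θ θ ≤ B α₀ α₀ := hlong α₀ hα₀ θ hθ
    have hθθpos : 0 < B θ θ := hBposΦ θ hθ
    have hcoβ : co β χ * B α α = 2 * B β χ := by rw [← hBαβ]; exact hco β hβΦ χ
    have hcoα : co α χ * B α α = 2 * B α χ := hco α hα χ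
    have hcoθ : co θ χ * B θ θ = 2 * B θ χ := hco θ hθ χ
    have hαα : 0 < B α α := hBposΦ α hα
    have h1 : |co β χ| * B α α = 2 * |B β χ| := by
      rw [← abs_of_pos hαα, ← abs_mul, hcoβ, abs_mul]
      norm_num
    have h2 : |co α χ| * B α α = 2 * |B α χ| := by
      rw [← abs_of_pos hαα, ← abs_mul, hcoα, abs_mul]
      norm_num
    have hαabs : 0 < |co α χ| := abs_pos.mpr hne
    rw [abs_div, div_le_iff₀ hαabs]
    have hcθ0 : 0 ≤ co θ χ := by nlinarith
    have k1 : 2 * B θ χ ≤ co θ χ * B α₀ α₀ := by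
      nlinarith [mul_nonneg hcθ0 (sub_nonneg.mpr hBβθ)]
    have k2 : co θ χ * B α₀ α₀ ≤ ((p:ℚ) - 1) * (2 * |B α χ|) := by
      have e1 := mul_le_mul_of_nonneg_right hle (le_of_lt hL)
      have e2 := mul_le_mul_of_nonneg_left
        (show B α₀ α₀ ≤ 2 * |B α χ| by linarith) (show (0:ℚ) ≤ (p:ℚ) - 1 by linarith)
      linarith
    have h3 : |co β χ| * B α α ≤ ((p:ℚ) - 1) * |co α χ| * B α α := by
      calc |co β χ| * B α α = 2 * |B β χ| := h1
        _ ≤ 2 * B θ χ := by linarith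
        _ ≤ ((p:ℚ) - 1) * (2 * |B α χ|) := le_trans k1 k2
        _ = ((p:ℚ) - 1) * |co α χ| * B α α := by rw [mul_assoc, ← h2]
    exact le_of_mul_le_mul_right h3 hαα
end

section
/- Let Φ be a reduced irreducible root system spanning V with base Δ, and write the highest coroot as ʰα∨ = Σ_{α∈Δ} m∨(α)·α∨ with m∨(α) ∈ ℤ≥1. Let β, γ ∈ Δ be distinct simple roots with m∨(β) ≥ 2. Then there exists a positive coroot δ∨ ∈ Φ∨, with decomposition δ∨ = Σ_{α∈Δ} n_α·α∨ into simple coroots (n_α ∈ ℤ≥0), such that either (i) n_β = 1 and n_γ ≥ 1, or (ii) n_β ≥ 2 and n_γ = 0. -/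
section Statement14Aux

variable {V : Type*} [AddCommGroup V] [Module ℚ V]
variable {Φ : Set V} {co : V → Module.Dual ℚ V}

/-- The reflection in a root, as a linear automorphism. -/
private noncomputable def s14_refl (hRS : QC.IsRootSystem Φ co) {α : V} (hα : α ∈ Φ) :
    V ≃ₗ[ℚ] V :=
  Module.reflection (hRS.pair_self α hα)

private lemma s14_refl_apply (hRS : QC.IsRootSystem Φ co) {α : V} (hα : α ∈ Φ) (x : V) :
    s14_refl hRS hα x = x - co α x • α := by
  simp [s14_refl, Module.reflection_apply]

private lemma s14_refl_mem (hRS : QC.IsRootSystem Φ co) {α : V} (hα : α ∈ Φ) :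
    s14_refl hRS hα ∈ QC.weylGroup Φ co :=
  Subgroup.subset_closure ⟨α, hα, fun x => s14_refl_apply hRS hα x⟩

private lemma s14_co_reflect (hRS : QC.IsRootSystem Φ co) {α β : V} (hα : α ∈ Φ) (hβ : β ∈ Φ) :
    co (β - co α β • α) = co β - co β α • co α := by
  have h := hRS.weyl_coroot _ (s14_refl_mem hRS hα) β hβ
  rw [s14_refl_apply hRS hα β] at h
  rw [h]
  ext x
  simp only [QC.coact, s14_refl, Module.reflection_symm, LinearEquiv.dualMap_apply,
    Module.reflection_apply, map_sub, map_smul, smul_eq_mul, LinearMap.sub_apply,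
    LinearMap.smul_apply]
  ring

private lemma s14_neg_mem (hRS : QC.IsRootSystem Φ co) {α : V} (hα : α ∈ Φ) : -α ∈ Φ := by
  have h := hRS.refl_mem α hα α hα
  rwa [hRS.pair_self α hα, show α - (2 : ℚ) • α = -α by
    rw [two_smul]; abel] at h

private lemma s14_co_neg (hRS : QC.IsRootSystem Φ co) {α : V} (hα : α ∈ Φ) :
    co (-α) = - co α := by
  have h := s14_co_reflect hRS hα hα
  rw [hRS.pair_self α hα, show α - (2 : ℚ) • α = -α by rw [two_smul]; abel] at h
  rw [h]
  ext x
  simp [two_smul]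

private lemma s14_weyl_finite (hRS : QC.IsRootSystem Φ co)
    (hspan : Submodule.span ℚ Φ = ⊤) : Finite (QC.weylGroup Φ co) := by
  have : Finite Φ := hRS.finite.to_subtype
  apply Finite.of_injective
    (fun w : QC.weylGroup Φ co => (fun a : Φ => (⟨w.1 a.1, hRS.weyl_root w.1 w.2 a.1 a.2⟩ : Φ)))
  intro w₁ w₂ h
  have h' : ∀ x ∈ Φ, w₁.1 x = w₂.1 x := by
    intro x hx
    have := congrFun h ⟨x, hx⟩
    exact Subtype.ext_iff.mp this
  have : (w₁.1 : V →ₗ[ℚ] V) = (w₂.1 : V →ₗ[ℚ] V) := LinearMap.ext_on hspan h'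
  exact Subtype.ext (LinearEquiv.toLinearMap_injective this)

/-- Existence of a Weyl-invariant positive definite form relating roots and coroots. -/
private lemma s14_exists_form [FiniteDimensional ℚ V] (hRS : QC.IsRootSystem Φ co)
    (hspan : Submodule.span ℚ Φ = ⊤) :
    ∃ P : V →ₗ[ℚ] V →ₗ[ℚ] ℚ,
      (∀ x y, P x y = P y x) ∧ (∀ x, 0 ≤ P x x) ∧ (∀ x : V, P x x = 0 → x = 0) ∧
      (∀ α ∈ Φ, ∀ y : V, P α α * co α y = 2 * P α y) := by
  classical
  set b := Module.finBasis ℚ V with hb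
  set Q : V →ₗ[ℚ] V →ₗ[ℚ] ℚ := ∑ i, (b.coord i).smulRight (b.coord i) with hQ
  have hQapp : ∀ x y, Q x y = ∑ i, b.coord i x * b.coord i y := by
    intro x y
    simp [hQ, LinearMap.sum_apply, LinearMap.smulRight_apply, smul_eq_mul, mul_comm]
  have hQnn : ∀ x, 0 ≤ Q x x := by
    intro x
    rw [hQapp]
    exact Finset.sum_nonneg fun i _ => mul_self_nonneg _
  have hQdef : ∀ x, Q x x = 0 → x = 0 := by
    intro x hx
    rw [hQapp] at hx
    have := (Finset.sum_eq_zero_iff_of_nonneg (fun i _ => mul_self_nonneg (b.coord i x))).mp hx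
    exact b.forall_coord_eq_zero_iff.mp fun i =>
      (mul_self_eq_zero).mp (this i (Finset.mem_univ i))
  haveI : Finite (QC.weylGroup Φ co) := s14_weyl_finite hRS hspan
  haveI : Fintype (QC.weylGroup Φ co) := Fintype.ofFinite _
  set P : V →ₗ[ℚ] V →ₗ[ℚ] ℚ :=
    ∑ w : QC.weylGroup Φ co, Q.compl₁₂ (w.1 : V →ₗ[ℚ] V) (w.1 : V →ₗ[ℚ] V) with hP
  have hPapp : ∀ x y, P x y = ∑ w : QC.weylGroup Φ co, Q (w.1 x) (w.1 y) := by
    intro x y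
    simp [hP, LinearMap.sum_apply, LinearMap.compl₁₂_apply]
  have hPsym : ∀ x y, P x y = P y x := by
    intro x y
    rw [hPapp, hPapp]
    refine Finset.sum_congr rfl fun w _ => ?_
    rw [hQapp, hQapp]
    exact Finset.sum_congr rfl fun i _ => mul_comm _ _
  have hPnn : ∀ x, 0 ≤ P x x := by
    intro x
    rw [hPapp]
    exact Finset.sum_nonneg fun w _ => hQnn _
  have hPdef : ∀ x : V, P x x = 0 → x = 0 := by
    intro x hx
    rw [hPapp] at hx
    have h1 := (Finset.sum_eq_zero_iff_of_nonneg (fun w _ => hQnn (w.1 x))).mp hx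
      (1 : QC.weylGroup Φ co) (Finset.mem_univ _)
    have : ((1 : QC.weylGroup Φ co) : V ≃ₗ[ℚ] V) x = x := rfl
    rw [this] at h1
    exact hQdef x h1
  have hPinv : ∀ u : QC.weylGroup Φ co, ∀ x y, P (u.1 x) (u.1 y) = P x y := by
    intro u x y
    rw [hPapp, hPapp]
    exact Fintype.sum_equiv (Equiv.mulRight u)
      (fun w => Q (w.1 (u.1 x)) (w.1 (u.1 y))) (fun w => Q (w.1 x) (w.1 y)) (fun w => rfl)
  refine ⟨P, hPsym, hPnn, hPdef, ?_⟩
  intro α hα y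
  set s : QC.weylGroup Φ co := ⟨s14_refl hRS hα, s14_refl_mem hRS hα⟩ with hs
  have hinv := hPinv s α y
  have h1 : s.1 α = -α := by
    show s14_refl hRS hα α = -α
    rw [s14_refl_apply hRS hα, hRS.pair_self α hα, two_smul]; abel
  have h2 : s.1 y = y - co α y • α := s14_refl_apply hRS hα y
  rw [h1, h2] at hinv
  simp only [map_neg, map_sub, map_smul, LinearMap.neg_apply, LinearMap.sub_apply,
    LinearMap.smul_apply, smul_eq_mul] at hinv
  linarith

end Statement14Aux
section Statement14Aux2

variable {V : Type*} [AddCommGroup V] [Module ℚ V]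
variable {Φ : Set V} {co : V → Module.Dual ℚ V} {Δ : Set V}

private lemma s14_pq [FiniteDimensional ℚ V] (hRS : QC.IsRootSystem Φ co)
    (hspan : Submodule.span ℚ Φ = ⊤) {x y : V} (hx : x ∈ Φ) (hy : y ∈ Φ)
    (hne : x ≠ y) (hne' : x ≠ -y) (hpos : 0 < co x y) :
    1 ≤ co y x ∧ (co x y = 1 ∨ co y x = 1) := by
  obtain ⟨P, hsym, hnn, hdef, hkey⟩ := s14_exists_form hRS hspan
  have hxx : 0 < P x x :=
    lt_of_le_of_ne (hnn x) (fun h => hRS.ne_zero x hx (hdef x h.symm))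
  have hyy : 0 < P y y :=
    lt_of_le_of_ne (hnn y) (fun h => hRS.ne_zero y hy (hdef y h.symm))
  have id1 : P x x * co x y = 2 * P x y := hkey x hx y
  have id2 : P y y * co y x = 2 * P x y := by
    rw [hkey y hy x]; rw [hsym y x]
  have hPxy : 0 < P x y := by nlinarith
  have hq : 0 < co y x := by nlinarith
  have hz : P x x • y - P x y • x ≠ 0 := by
    intro h
    have h' : P x x • y = P x y • x := by rwa [sub_eq_zero] at h
    have hyx : y = (P x y / P x x) • x := by
      rw [div_eq_inv_mul, ← smul_smul, ← h', inv_smul_smul₀ hxx.ne']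
    have hmem : (P x y / P x x) • x ∈ Φ := by rw [← hyx]; exact hy
    rcases hRS.reduced x hx _ hmem with h1 | h1
    · exact hne (by rw [hyx, h1, one_smul])
    · exact hne' (by rw [hyx, h1, neg_one_smul, neg_neg])
  have hzz : 0 < P (P x x • y - P x y • x) (P x x • y - P x y • x) :=
    lt_of_le_of_ne (hnn _) (fun h => hz (hdef _ h.symm))
  have hexp : P (P x x • y - P x y • x) (P x x • y - P x y • x)
      = P x x * (P x x * P y y - P x y ^ 2) := by
    simp only [map_sub, map_smul, LinearMap.sub_apply, LinearMap.smul_apply, smul_eq_mul]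
    rw [hsym y x]; ring
  have hcs : P x y ^ 2 < P x x * P y y := by nlinarith
  have hprod : co x y * co y x < 4 := by nlinarith
  obtain ⟨m, hm⟩ := hRS.pair_int x hx y hy
  obtain ⟨n, hn⟩ := hRS.pair_int y hy x hx
  have hm1 : 1 ≤ m := by
    have : (0 : ℚ) < (m : ℚ) := hm ▸ hpos
    exact_mod_cast this
  have hn1 : 1 ≤ n := by
    have : (0 : ℚ) < (n : ℚ) := hn ▸ hq
    exact_mod_cast this
  have hmn : m * n < 4 := by
    have : ((m * n : ℤ) : ℚ) < 4 := by push_cast; rw [← hm, ← hn]; exact hprod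
    exact_mod_cast this
  constructor
  · rw [hn]; exact_mod_cast hn1
  · have : m = 1 ∨ n = 1 := by
      by_contra hc
      push_neg at hc
      have h2m : 2 ≤ m := by omega
      have h2n : 2 ≤ n := by omega
      nlinarith
    rcases this with h | h
    · exact Or.inl (by rw [hm, h]; norm_num)
    · exact Or.inr (by rw [hn, h]; norm_num)

private lemma s14_stringCo [FiniteDimensional ℚ V] (hRS : QC.IsRootSystem Φ co)
    (hspan : Submodule.span ℚ Φ = ⊤) {δ b : V}
    (hδ : δ ∈ Φ) (hb : b ∈ Φ) (hne : δ ≠ b) (h1 : 1 ≤ co δ b) :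
    ∃ ε ∈ Φ, co ε = co δ - co b := by
  have hne' : δ ≠ -b := by
    intro h
    rw [h, s14_co_neg hRS hb] at h1
    simp only [LinearMap.neg_apply, hRS.pair_self b hb] at h1
    linarith
  obtain ⟨hq, hdi⟩ := s14_pq hRS hspan hδ hb hne hne' (lt_of_lt_of_le one_pos h1)
  rcases hdi with hp | hq1
  · refine ⟨δ - co b δ • b, hRS.refl_mem b hb δ hδ, ?_⟩
    rw [s14_co_reflect hRS hb hδ, hp, one_smul]
  · refine ⟨-(b - co δ b • δ), s14_neg_mem hRS (hRS.refl_mem δ hδ b hb), ?_⟩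
    rw [s14_co_neg hRS (hRS.refl_mem δ hδ b hb), s14_co_reflect hRS hδ hb, hq1, one_smul,
      neg_sub]

private lemma s14_map_sum (m : V →₀ ℕ) :
    Finsupp.linearCombination ℚ (id : V → V) (m.mapRange (Nat.cast) Nat.cast_zero) =
      m.sum fun v n => (n : ℚ) • v := by
  rw [Finsupp.linearCombination_apply]
  exact Finsupp.sum_mapRange_index (by simp)

private lemma s14_diff_not_root (hΔ : QC.IsBase Φ co Δ) {a b : V}
    (ha : a ∈ Δ) (hb : b ∈ Δ) (hne : a ≠ b) : b - a ∉ Φ := by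
  classical
  intro hmem
  obtain ⟨m, hmsupp, hor⟩ := hΔ.decomp _ hmem
  set g : V →₀ ℚ := m.mapRange (Nat.cast) Nat.cast_zero with hg
  have hgcomb : Finsupp.linearCombination ℚ (id : V → V) g = m.sum fun v n => (n : ℚ) • v := by
    rw [hg]; exact s14_map_sum m
  have hgsupp : ↑g.support ⊆ Δ := by
    refine subset_trans ?_ hmsupp
    exact_mod_cast Finsupp.support_mapRange
  rcases hor with hcase | hcase
  · set l : V →₀ ℚ := Finsupp.single b 1 - Finsupp.single a 1 - g with hl
    have hlsupp : l ∈ Finsupp.supported ℚ ℚ Δ := by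
      rw [Finsupp.mem_supported]
      intro v hv
      by_contra hvΔ
      apply Finsupp.mem_support_iff.mp hv
      have hva : v ≠ a := fun h => hvΔ (h ▸ ha)
      have hvb : v ≠ b := fun h => hvΔ (h ▸ hb)
      have hg0 : g v = 0 :=
        Finsupp.notMem_support_iff.mp (fun h => hvΔ (hgsupp h))
      simp [hl, Finsupp.sub_apply, Finsupp.single_apply, hva.symm, hvb.symm, hg0,
        if_neg]
    have hcomb : Finsupp.linearCombination ℚ (id : V → V) l = 0 := by
      simp only [hl, map_sub, Finsupp.linearCombination_single]
      rw [hgcomb, ← hcase]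
      simp only [id_eq, one_smul]
      abel
    have hl0 : l = 0 := linearIndepOn_iff.mp (linearIndependent_subtype_iff.mp hΔ.indep) l hlsupp hcomb
    have hla : l a = 0 := by rw [hl0]; rfl
    rw [hl, Finsupp.sub_apply, Finsupp.sub_apply, Finsupp.single_apply, Finsupp.single_apply,
      if_neg (Ne.symm hne), if_pos rfl] at hla
    have hga : g a = (m a : ℚ) := rfl
    rw [hga] at hla
    have h2 : (0:ℚ) ≤ (m a : ℚ) := Nat.cast_nonneg _
    linarith
  · set l : V →₀ ℚ := Finsupp.single b 1 - Finsupp.single a 1 + g with hl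
    have hlsupp : l ∈ Finsupp.supported ℚ ℚ Δ := by
      rw [Finsupp.mem_supported]
      intro v hv
      by_contra hvΔ
      apply Finsupp.mem_support_iff.mp hv
      have hva : v ≠ a := fun h => hvΔ (h ▸ ha)
      have hvb : v ≠ b := fun h => hvΔ (h ▸ hb)
      have hg0 : g v = 0 :=
        Finsupp.notMem_support_iff.mp (fun h => hvΔ (hgsupp h))
      simp [hl, Finsupp.add_apply, Finsupp.sub_apply, Finsupp.single_apply, hva.symm,
        hvb.symm, hg0, if_neg]
    have hs : (m.sum fun v n => (n : ℚ) • v) = a - b := by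
      rw [← neg_neg (m.sum fun v n => (n : ℚ) • v), ← hcase, neg_sub]
    have hcomb : Finsupp.linearCombination ℚ (id : V → V) l = 0 := by
      simp only [hl, map_add, map_sub, Finsupp.linearCombination_single]
      rw [hgcomb, hs]
      simp only [id_eq, one_smul]
      abel
    have hl0 : l = 0 := linearIndepOn_iff.mp (linearIndependent_subtype_iff.mp hΔ.indep) l hlsupp hcomb
    have hlb : l b = 0 := by rw [hl0]; rfl
    rw [hl, Finsupp.add_apply, Finsupp.sub_apply, Finsupp.single_apply, Finsupp.single_apply,
      if_pos rfl, if_neg hne] at hlb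
    have hgb : g b = (m b : ℚ) := rfl
    rw [hgb] at hlb
    have h2 : (0:ℚ) ≤ (m b : ℚ) := Nat.cast_nonneg _
    linarith

end Statement14Aux2
section Statement14Aux3

variable {V : Type*} [AddCommGroup V] [Module ℚ V]
variable {Φ : Set V} {co : V → Module.Dual ℚ V} {Δ : Set V}

/-- Uniqueness of rational decompositions into simple coroots. -/
private lemma s14_co_indep [FiniteDimensional ℚ V] (hRS : QC.IsRootSystem Φ co)
    (hspan : Submodule.span ℚ Φ = ⊤) (hΔ : QC.IsBase Φ co Δ)
    {t : V →₀ ℚ} (hts : ↑t.support ⊆ Δ) (h0 : (t.sum fun v r => r • co v) = 0) :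
    t = 0 := by
  classical
  obtain ⟨P, hsym, hnn, hdef, hkey⟩ := s14_exists_form hRS hspan
  have hPpos : ∀ v ∈ t.support, 0 < P v v := by
    intro v hv
    have hvΦ : v ∈ Φ := hΔ.subset (hts hv)
    exact lt_of_le_of_ne (hnn v) (fun h => hRS.ne_zero v hvΦ (hdef v h.symm))
  set u : V := ∑ v ∈ t.support, (2 * t v / P v v) • v with hu
  have hPu : ∀ y : V, P u y = 0 := by
    intro y
    have h0y : (t.sum fun v r => r • co v) y = 0 := by rw [h0]; rfl
    rw [Finsupp.sum, LinearMap.coe_sum, Finset.sum_apply] at h0y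
    have hterm : ∀ v ∈ t.support, P ((2 * t v / P v v) • v) y = t v * co v y := by
      intro v hv
      have hvΦ : v ∈ Φ := hΔ.subset (hts hv)
      have hvv := hPpos v hv
      have hk := hkey v hvΦ y
      rw [map_smul, LinearMap.smul_apply, smul_eq_mul]
      rw [div_mul_eq_mul_div, div_eq_iff hvv.ne']
      linear_combination (-(t v)) * hk
    rw [hu, map_sum, LinearMap.sum_apply, Finset.sum_congr rfl hterm]
    rw [← h0y]
    refine Finset.sum_congr rfl fun v hv => ?_
    simp [smul_eq_mul]
  have hu0 : u = 0 := hdef u (hPu u)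
  set l : V →₀ ℚ := Finsupp.onFinset t.support (fun v => 2 * t v / P v v)
    (fun v hv => by
      rw [Finsupp.mem_support_iff]
      intro h
      apply hv
      simp [h]) with hldef
  have hlcomb : Finsupp.linearCombination ℚ (id : V → V) l = u := by
    rw [Finsupp.linearCombination_apply,
      Finsupp.sum_of_support_subset l Finsupp.support_onFinset_subset _
        (fun i _ => by simp)]
    rw [hu]
    refine Finset.sum_congr rfl fun v hv => ?_
    simp [hldef, Finsupp.onFinset_apply]
  have hlsupp : l ∈ Finsupp.supported ℚ ℚ Δ := by
    rw [Finsupp.mem_supported]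
    exact subset_trans (Finset.coe_subset.mpr Finsupp.support_onFinset_subset) hts
  have hl0 : l = 0 := linearIndepOn_iff.mp (linearIndependent_subtype_iff.mp hΔ.indep) l hlsupp (by rw [hlcomb, hu0])
  ext v
  by_cases hv : v ∈ t.support
  · have hlv : (2 * t v / P v v) = 0 := by
      have := DFunLike.congr_fun hl0 v
      rwa [hldef, Finsupp.onFinset_apply] at this
    have hvv := hPpos v hv
    rcases div_eq_zero_iff.mp hlv with h | h
    · have : t v = 0 := by linarith
      simp [this]
    · exact absurd h hvv.ne'
  · simp [Finsupp.notMem_support_iff.mp hv]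

/-- Descent: a coroot of height at least two stays a coroot after subtracting
some simple coroot occurring in it. -/
private lemma s14_descent [FiniteDimensional ℚ V] (hRS : QC.IsRootSystem Φ co)
    (hspan : Submodule.span ℚ Φ = ⊤) (hΔ : QC.IsBase Φ co Δ)
    {δ : V} (hδ : δ ∈ Φ) {n : V →₀ ℕ} (hsupp : ↑n.support ⊆ Δ)
    (hdec : co δ = n.sum fun v k => (k : ℚ) • co v)
    (hht : 2 ≤ n.sum fun _ k => k) :
    ∃ a ∈ Δ, 1 ≤ n a ∧ ∃ ε ∈ Φ, co ε = co δ - co a := by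
  classical
  -- evaluate the decomposition at δ
  have h2 : (∑ v ∈ n.support, (n v : ℚ) * co v δ) = 2 := by
    have := hRS.pair_self δ hδ
    rw [hdec] at this
    rw [Finsupp.sum, LinearMap.coe_sum, Finset.sum_apply] at this
    rw [← this]
    exact Finset.sum_congr rfl fun v hv => by simp [smul_eq_mul]
  have hex : ∃ a ∈ n.support, 0 < co a δ := by
    by_contra hc
    push_neg at hc
    have : (∑ v ∈ n.support, (n v : ℚ) * co v δ) ≤ 0 :=
      Finset.sum_nonpos fun v hv =>
        mul_nonpos_of_nonneg_of_nonpos (Nat.cast_nonneg _) (hc v hv)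
    linarith
  obtain ⟨a, hasupp, hapos⟩ := hex
  have haΔ : a ∈ Δ := hsupp hasupp
  have haΦ : a ∈ Φ := hΔ.subset haΔ
  have hna : 1 ≤ n a := Nat.one_le_iff_ne_zero.mpr (Finsupp.mem_support_iff.mp hasupp)
  -- a ≠ δ
  have hne : a ≠ δ := by
    intro h
    -- then co a has a decomposition of height ≥ 2 : contradiction with uniqueness
    subst h
    set t : V →₀ ℚ := n.mapRange (Nat.cast) Nat.cast_zero - Finsupp.single a 1 with ht
    have htsum : (t.sum fun v r => r • co v) = 0 := by
      rw [ht, Finsupp.sum_sub_index (fun v r₁ r₂ => sub_smul r₁ r₂ (co v))]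
      rw [Finsupp.sum_mapRange_index (by intro v; simp),
        Finsupp.sum_single_index (by simp)]
      rw [← hdec]
      simp
    have htsupp : ↑t.support ⊆ Δ := by
      intro v hv
      rw [ht] at hv
      have hv' := Finsupp.support_sub hv
      rcases Finset.mem_union.mp hv' with h | h
      · exact hsupp (Finsupp.support_mapRange h)
      · have : v = a := Finset.mem_singleton.mp (Finsupp.support_single_subset h)
        rw [this]; exact haΔ
    have ht0 : t = 0 := s14_co_indep hRS hspan hΔ htsupp htsum
    have hnv : ∀ v, (n v : ℚ) = Finsupp.single a 1 v := by
      intro v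
      have := DFunLike.congr_fun ht0 v
      rw [ht, Finsupp.sub_apply, Finsupp.mapRange_apply] at this
      rw [Finsupp.zero_apply] at this
      linarith [this]
    have hn1 : n = Finsupp.single a 1 := by
      ext v
      have h := hnv v
      rw [Finsupp.single_apply] at h
      rw [Finsupp.single_apply]
      split_ifs at h ⊢
      · exact_mod_cast h
      · exact_mod_cast h
    rw [hn1, Finsupp.sum_single_index rfl] at hht
    omega
  -- pairing is a positive integer: co a δ ≥ 1
  have ha1 : 1 ≤ co a δ := by
    obtain ⟨k, hk⟩ := hRS.pair_int a haΦ δ hδ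
    have : 1 ≤ k := by
      have : (0:ℚ) < (k:ℚ) := hk ▸ hapos
      exact_mod_cast this
    rw [hk]; exact_mod_cast this
  -- a ≠ -δ
  have hne' : a ≠ -δ := by
    intro h
    rw [h] at ha1
    have : co (-δ) δ = -2 := by
      rw [s14_co_neg hRS hδ]
      simp [hRS.pair_self δ hδ]
    rw [this] at ha1; linarith
  obtain ⟨hq, _⟩ := s14_pq hRS hspan haΦ hδ hne hne' hapos
  obtain ⟨ε, hε, hcoε⟩ := s14_stringCo hRS hspan hδ haΦ (Ne.symm hne) hq
  exact ⟨a, haΔ, hna, ε, hε, hcoε⟩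

end Statement14Aux3
section Statement14Aux4

variable {V : Type*} [AddCommGroup V] [Module ℚ V]
variable {Φ : Set V} {co : V → Module.Dual ℚ V} {Δ : Set V}

private lemma s14_le_ht (n : V →₀ ℕ) (b : V) : n b ≤ n.sum fun _ k => k := by
  by_cases h : b ∈ n.support
  · exact Finset.single_le_sum (f := fun v => n v) (fun _ _ => Nat.zero_le _) h
  · simp [Finsupp.notMem_support_iff.mp h]

private lemma s14_chain [FiniteDimensional ℚ V] (hRS : QC.IsRootSystem Φ co)
    (hspan : Submodule.span ℚ Φ = ⊤) (hΔ : QC.IsBase Φ co Δ)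
    {β γ : V} (hβ : β ∈ Δ) (hγ : γ ∈ Δ) (hβγ : β ≠ γ) :
    ∀ h : ℕ, ∀ δ, δ ∈ Φ → ∀ n : V →₀ ℕ, ↑n.support ⊆ Δ →
      co δ = n.sum (fun v k => (k : ℚ) • co v) → (n.sum fun _ k => k) ≤ h →
      2 ≤ n β → 1 ≤ n γ →
      ∃ δ' ∈ Φ, ∃ nn : V →₀ ℕ, ↑nn.support ⊆ Δ ∧
        co δ' = nn.sum (fun v k => (k : ℚ) • co v) ∧
        ((nn β = 1 ∧ 1 ≤ nn γ) ∨ (2 ≤ nn β ∧ nn γ = 0)) := by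
  intro h
  induction h with
  | zero =>
    intro δ hδ n hsupp hdec hht hb hg
    have := s14_le_ht n β
    omega
  | succ h ih =>
    intro δ hδ n hsupp hdec hht hb hg
    classical
    have hht2 : 2 ≤ n.sum fun _ k => k := le_trans hb (s14_le_ht n β)
    obtain ⟨a, haΔ, hna, ε, hε, hcoε⟩ := s14_descent hRS hspan hΔ hδ hsupp hdec hht2
    set n' : V →₀ ℕ := n - Finsupp.single a 1 with hn'
    have hsum : n = n' + Finsupp.single a 1 := by
      ext v
      simp only [Finsupp.add_apply, hn', Finsupp.tsub_apply, Finsupp.single_apply]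
      split_ifs with hc
      · subst hc; omega
      · omega
    have hsupp' : ↑n'.support ⊆ Δ :=
      subset_trans (Finset.coe_subset.mpr Finsupp.support_tsub) hsupp
    have hdec' : co ε = n'.sum fun v k => (k : ℚ) • co v := by
      rw [hcoε, hdec, hsum, Finsupp.sum_add_index' (fun v => by simp)
        (fun v k l => by push_cast; rw [add_smul]),
        Finsupp.sum_single_index (by simp), Nat.cast_one, one_smul]
      abel
    have hh' : (n'.sum fun _ k => k) + 1 = n.sum fun _ k => k := by
      conv_rhs => rw [hsum]
      rw [Finsupp.sum_add_index' (fun _ => rfl) (fun _ k l => rfl),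
        Finsupp.sum_single_index rfl]
    have hht' : (n'.sum fun _ k => k) ≤ h := by omega
    by_cases hab : a = β
    · have hβ1 : n' β = n β - 1 := by
        simp [hn', Finsupp.tsub_apply, Finsupp.single_apply, hab]
      have hγ1 : n' γ = n γ := by
        simp [hn', Finsupp.tsub_apply, Finsupp.single_apply, hab, hβγ]
      by_cases h2 : n β = 2
      · exact ⟨ε, hε, n', hsupp', hdec', Or.inl ⟨by omega, by omega⟩⟩
      · exact ih ε hε n' hsupp' hdec' hht' (by omega) (by omega)
    · by_cases hag : a = γ
      · have hβ1 : n' β = n β := by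
          simp [hn', Finsupp.tsub_apply, Finsupp.single_apply, hab]
        have hγ1 : n' γ = n γ - 1 := by
          simp [hn', Finsupp.tsub_apply, Finsupp.single_apply, hag]
        by_cases h1 : n γ = 1
        · exact ⟨ε, hε, n', hsupp', hdec', Or.inr ⟨by omega, by omega⟩⟩
        · exact ih ε hε n' hsupp' hdec' hht' (by omega) (by omega)
      · have hβ1 : n' β = n β := by
          simp [hn', Finsupp.tsub_apply, Finsupp.single_apply, hab]
        have hγ1 : n' γ = n γ := by
          simp [hn', Finsupp.tsub_apply, Finsupp.single_apply, hag]
        exact ih ε hε n' hsupp' hdec' hht' (by omega) (by omega)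

end Statement14Aux4

/-- key claim in the proof of Lemma 3.1 of the paper. Let `Φ` be
irreducible spanning `V` with base `Δ`, and write the highest coroot as
`ʰα∨ = Σ_{α ∈ Δ} m∨(α) α∨` with all `m∨(α) ≥ 1`. If `β, γ ∈ Δ` are distinct with
`m∨(β) ≥ 2`, then there is a positive coroot `δ∨ = Σ n_α α∨` with either `n_β = 1` and
`n_γ ≥ 1`, or `n_β ≥ 2` and `n_γ = 0`. -/
theorem statement14 {V : Type*} [AddCommGroup V] [Module ℚ V] [FiniteDimensional ℚ V]
    (Φ : Set V) (co : V → Module.Dual ℚ V)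
    (hRS : QC.IsRootSystem Φ co) (hirr : QC.IsIrreducible Φ co)
    (hspan : Submodule.span ℚ Φ = ⊤)
    (Δ : Set V) (hΔ : QC.IsBase Φ co Δ)
    -- `θ ∈ Φ` is the root whose coroot is the highest coroot, with coefficients `c`
    (θ : V) (hθ : θ ∈ Φ)
    (c : V →₀ ℕ) (hcsupp : ↑c.support ⊆ Δ)
    (hcdecomp : co θ = c.sum fun v n => (n : ℚ) • co v)
    (hc1 : ∀ α ∈ Δ, 1 ≤ c α)
    (hhigh : ∀ β ∈ Φ, ∃ m : V →₀ ℕ, ↑m.support ⊆ Δ ∧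
        co θ - co β = m.sum fun v n => (n : ℚ) • co v)
    (β γ : V) (hβ : β ∈ Δ) (hγ : γ ∈ Δ) (hβγ : β ≠ γ) (hc2 : 2 ≤ c β) :
    ∃ δ ∈ Φ, ∃ nn : V →₀ ℕ, ↑nn.support ⊆ Δ ∧
      co δ = nn.sum (fun v k => (k : ℚ) • co v) ∧
      ((nn β = 1 ∧ 1 ≤ nn γ) ∨ (2 ≤ nn β ∧ nn γ = 0)) := by
  exact s14_chain hRS hspan hΔ hβ hγ hβγ (c.sum fun _ k => k) θ hθ c hcsupp hcdecomp
    le_rfl hc2 (hc1 γ hγ)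
end
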